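/- Let μ ∈ ℂ, let (Q,R) be smooth matrix-valued functions, let (Ψ₁,Ψ₂) satisfy the Lax pair at ζ = μ and let (Φ₁,Φ₂) satisfy the adjoint Lax pair at ζ = μ (for the same potentials (Q,R)). Then the conservation-law identity ∂_t(Φ₁Ψ₁ − Φ₂Ψ₂) = ∂_x( 4μ (Φ₁Ψ₁ − Φ₂Ψ₂) + 2i (Φ₁ Q Ψ₂ + Φ₂ R Ψ₁) ) holds. Consequently, the two relations F_x = Φ₁Ψ₁ − Φ₂Ψ₂ and F_t = 4μ F_x + 2i(Φ₁ Q Ψ₂ + Φ₂ R Ψ₁) defining the matrix F are compatible. -/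

import Mathlib

open Matrix Complex

noncomputable section

/-- Entrywise partial derivative in the first (space) variable. -/
def pdx {n p : Type*} (Q : ℝ → ℝ → Matrix n p ℂ) : ℝ → ℝ → Matrix n p ℂ :=
  fun x t => Matrix.of fun i j => deriv (fun x' => Q x' t i j) x

/-- Entrywise partial derivative in the second (time) variable. -/
def pdt {n p : Type*} (Q : ℝ → ℝ → Matrix n p ℂ) : ℝ → ℝ → Matrix n p ℂ :=
  fun x t => Matrix.of fun i j => deriv (fun t' => Q x t' i j) t

/-- Entrywise joint smoothness in (x,t). -/
def SmoothM {n p : Type*} (Q : ℝ → ℝ → Matrix n p ℂ) : Prop :=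
  ∀ i j, ContDiff ℝ (⊤ : ℕ∞) (fun q : ℝ × ℝ => Q q.1 q.2 i j)

/-- The matrix NLS system `i Q_t + Q_xx - 2QRQ = 0`, `i R_t - R_xx + 2RQR = 0`. -/
def MatrixNLS {l m : Type*} [Fintype l] [Fintype m]
    (Q : ℝ → ℝ → Matrix l m ℂ) (R : ℝ → ℝ → Matrix m l ℂ) : Prop :=
  (∀ x t : ℝ, Complex.I • pdt Q x t + pdx (pdx Q) x t
      - (2 : ℂ) • (Q x t * R x t * Q x t) = 0) ∧
  (∀ x t : ℝ, Complex.I • pdt R x t - pdx (pdx R) x t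
      + (2 : ℂ) • (R x t * Q x t * R x t) = 0)

/-- The spatial Lax matrix `U(ζ)`. -/
def LaxU {l m : Type*} [DecidableEq l] [DecidableEq m] (ζ : ℂ)
    (Q : ℝ → ℝ → Matrix l m ℂ) (R : ℝ → ℝ → Matrix m l ℂ) :
    ℝ → ℝ → Matrix (l ⊕ m) (l ⊕ m) ℂ :=
  fun x t => Matrix.fromBlocks ((-(Complex.I * ζ)) • 1) (Q x t) (R x t) ((Complex.I * ζ) • 1)

/-- The temporal Lax matrix `V(ζ)`. -/
def LaxV {l m : Type*} [Fintype l] [Fintype m] [DecidableEq l] [DecidableEq m] (ζ : ℂ)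
    (Q : ℝ → ℝ → Matrix l m ℂ) (R : ℝ → ℝ → Matrix m l ℂ) :
    ℝ → ℝ → Matrix (l ⊕ m) (l ⊕ m) ℂ :=
  fun x t => Matrix.fromBlocks
    ((-(2 * Complex.I * ζ ^ 2)) • 1 - Complex.I • (Q x t * R x t))
    ((2 * ζ) • Q x t + Complex.I • pdx Q x t)
    ((2 * ζ) • R x t - Complex.I • pdx R x t)
    ((2 * Complex.I * ζ ^ 2) • 1 + Complex.I • (R x t * Q x t))

/-- `Ψ` is a linear eigenfunction of the Lax pair at `ζ`. -/
def IsLaxEigen {l m p : Type*} [Fintype l] [Fintype m] [DecidableEq l] [DecidableEq m] (ζ : ℂ)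
    (Q : ℝ → ℝ → Matrix l m ℂ) (R : ℝ → ℝ → Matrix m l ℂ)
    (Ψ : ℝ → ℝ → Matrix (l ⊕ m) p ℂ) : Prop :=
  (∀ x t : ℝ, pdx Ψ x t = LaxU ζ Q R x t * Ψ x t) ∧
  (∀ x t : ℝ, pdt Ψ x t = LaxV ζ Q R x t * Ψ x t)

/-- `Φ` is an adjoint linear eigenfunction of the Lax pair at `ζ`. -/
def IsAdjLaxEigen {l m p : Type*} [Fintype l] [Fintype m] [DecidableEq l] [DecidableEq m] (ζ : ℂ)
    (Q : ℝ → ℝ → Matrix l m ℂ) (R : ℝ → ℝ → Matrix m l ℂ)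
    (Φ : ℝ → ℝ → Matrix p (l ⊕ m) ℂ) : Prop :=
  (∀ x t : ℝ, pdx Φ x t = -(Φ x t * LaxU ζ Q R x t)) ∧
  (∀ x t : ℝ, pdt Φ x t = -(Φ x t * LaxV ζ Q R x t))

section Aux


variable {n p q : Type*}

lemma SmoothM.diffx {A : ℝ → ℝ → Matrix n p ℂ} (hA : SmoothM A) (t : ℝ) (i : n) (j : p) :
    Differentiable ℝ (fun x' => A x' t i j) :=
  ((hA i j).differentiable (by simp)).comp ((differentiable_id.prodMk (differentiable_const t)))

lemma SmoothM.difft {A : ℝ → ℝ → Matrix n p ℂ} (hA : SmoothM A) (x : ℝ) (i : n) (j : p) :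
    Differentiable ℝ (fun t' => A x t' i j) :=
  ((hA i j).differentiable (by simp)).comp (((differentiable_const x).prodMk differentiable_id))

lemma smoothM_mul [Fintype p] {A : ℝ → ℝ → Matrix n p ℂ} {B : ℝ → ℝ → Matrix p q ℂ}
    (hA : SmoothM A) (hB : SmoothM B) : SmoothM (fun x t => A x t * B x t) := by
  intro i j
  simp only [Matrix.mul_apply]
  exact ContDiff.sum fun k _ => (hA i k).mul (hB k j)

lemma smoothM_add {A B : ℝ → ℝ → Matrix n p ℂ} (hA : SmoothM A) (hB : SmoothM B) :
    SmoothM (fun x t => A x t + B x t) := fun i j => by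
  simpa [Matrix.add_apply] using (hA i j).add (hB i j)

lemma smoothM_sub {A B : ℝ → ℝ → Matrix n p ℂ} (hA : SmoothM A) (hB : SmoothM B) :
    SmoothM (fun x t => A x t - B x t) := fun i j => by
  simpa [Matrix.sub_apply] using (hA i j).sub (hB i j)

lemma smoothM_smul (c : ℂ) {A : ℝ → ℝ → Matrix n p ℂ} (hA : SmoothM A) :
    SmoothM (fun x t => c • A x t) := fun i j => by
  simpa [Matrix.smul_apply, smul_eq_mul] using (contDiff_const (c := c)).mul (hA i j)

lemma pdx_mul [Fintype p] {A : ℝ → ℝ → Matrix n p ℂ} {B : ℝ → ℝ → Matrix p q ℂ}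
    (hA : SmoothM A) (hB : SmoothM B) (x t : ℝ) :
    pdx (fun x t => A x t * B x t) x t = pdx A x t * B x t + A x t * pdx B x t := by
  ext i j
  simp only [pdx, Matrix.of_apply, Matrix.add_apply, Matrix.mul_apply]
  rw [← Finset.sum_add_distrib]
  have h : ∀ k ∈ Finset.univ, HasDerivAt (fun x' => A x' t i k * B x' t k j)
      (deriv (fun x' => A x' t i k) x * B x t k j
        + A x t i k * deriv (fun x' => B x' t k j) x) x :=
    fun k _ => ((hA.diffx t i k x).hasDerivAt).mul ((hB.diffx t k j x).hasDerivAt)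
  have := (HasDerivAt.fun_sum h).deriv
  simpa [Matrix.mul_apply] using this

lemma pdt_mul [Fintype p] {A : ℝ → ℝ → Matrix n p ℂ} {B : ℝ → ℝ → Matrix p q ℂ}
    (hA : SmoothM A) (hB : SmoothM B) (x t : ℝ) :
    pdt (fun x t => A x t * B x t) x t = pdt A x t * B x t + A x t * pdt B x t := by
  ext i j
  simp only [pdt, Matrix.of_apply, Matrix.add_apply, Matrix.mul_apply]
  rw [← Finset.sum_add_distrib]
  have h : ∀ k ∈ Finset.univ, HasDerivAt (fun t' => A x t' i k * B x t' k j)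
      (deriv (fun t' => A x t' i k) t * B x t k j
        + A x t i k * deriv (fun t' => B x t' k j) t) t :=
    fun k _ => ((hA.difft x i k t).hasDerivAt).mul ((hB.difft x k j t).hasDerivAt)
  have := (HasDerivAt.fun_sum h).deriv
  simpa [Matrix.mul_apply] using this

lemma pdx_add {A B : ℝ → ℝ → Matrix n p ℂ} (hA : SmoothM A) (hB : SmoothM B) (x t : ℝ) :
    pdx (fun x t => A x t + B x t) x t = pdx A x t + pdx B x t := by
  ext i j
  simp only [pdx, Matrix.of_apply, Matrix.add_apply]
  exact deriv_add (hA.diffx t i j x) (hB.diffx t i j x)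

lemma pdt_sub {A B : ℝ → ℝ → Matrix n p ℂ} (hA : SmoothM A) (hB : SmoothM B) (x t : ℝ) :
    pdt (fun x t => A x t - B x t) x t = pdt A x t - pdt B x t := by
  ext i j
  simp only [pdt, Matrix.of_apply, Matrix.sub_apply]
  exact deriv_sub (hA.difft x i j t) (hB.difft x i j t)

lemma pdx_sub {A B : ℝ → ℝ → Matrix n p ℂ} (hA : SmoothM A) (hB : SmoothM B) (x t : ℝ) :
    pdx (fun x t => A x t - B x t) x t = pdx A x t - pdx B x t := by
  ext i j
  simp only [pdx, Matrix.of_apply, Matrix.sub_apply]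
  exact deriv_sub (hA.diffx t i j x) (hB.diffx t i j x)

lemma pdx_smul (c : ℂ) (A : ℝ → ℝ → Matrix n p ℂ) (x t : ℝ) :
    pdx (fun x t => c • A x t) x t = c • pdx A x t := by
  ext i j
  simp only [pdx, Matrix.of_apply, Matrix.smul_apply, smul_eq_mul]
  exact deriv_const_mul_field c

lemma pdx_fromRows (A : ℝ → ℝ → Matrix n q ℂ) (B : ℝ → ℝ → Matrix p q ℂ) (x t : ℝ) :
    pdx (fun x t => Matrix.fromRows (A x t) (B x t)) x t
      = Matrix.fromRows (pdx A x t) (pdx B x t) := by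
  ext (i | i) j <;>
    simp [pdx, Matrix.fromRows_apply_inl, Matrix.fromRows_apply_inr]

lemma pdt_fromRows (A : ℝ → ℝ → Matrix n q ℂ) (B : ℝ → ℝ → Matrix p q ℂ) (x t : ℝ) :
    pdt (fun x t => Matrix.fromRows (A x t) (B x t)) x t
      = Matrix.fromRows (pdt A x t) (pdt B x t) := by
  ext (i | i) j <;>
    simp [pdt, Matrix.fromRows_apply_inl, Matrix.fromRows_apply_inr]

lemma pdx_fromColumns (A : ℝ → ℝ → Matrix n p ℂ) (B : ℝ → ℝ → Matrix n q ℂ) (x t : ℝ) :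
    pdx (fun x t => Matrix.fromCols (A x t) (B x t)) x t
      = Matrix.fromCols (pdx A x t) (pdx B x t) := by
  ext i (j | j) <;>
    simp [pdx, Matrix.fromCols_apply_inl, Matrix.fromCols_apply_inr]

lemma pdt_fromColumns (A : ℝ → ℝ → Matrix n p ℂ) (B : ℝ → ℝ → Matrix n q ℂ) (x t : ℝ) :
    pdt (fun x t => Matrix.fromCols (A x t) (B x t)) x t
      = Matrix.fromCols (pdt A x t) (pdt B x t) := by
  ext i (j | j) <;>
    simp [pdt, Matrix.fromCols_apply_inl, Matrix.fromCols_apply_inr]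

lemma neg_fromColumns (A : Matrix n p ℂ) (B : Matrix n q ℂ) :
    -(Matrix.fromCols A B) = Matrix.fromCols (-A) (-B) := by
  ext i (j | j) <;> simp

end Aux

/-- for a linear eigenfunction and an adjoint linear eigenfunction at the
same `μ`, one has `∂ₜ(Φ₁Ψ₁ - Φ₂Ψ₂) = ∂ₓ(4μ(Φ₁Ψ₁ - Φ₂Ψ₂) + 2i(Φ₁QΨ₂ + Φ₂RΨ₁))`, so the
two relations defining `F` are compatible. -/
theorem F_defining_relations_compatible {l m : ℕ} (μ : ℂ)
    (Q : ℝ → ℝ → Matrix (Fin l) (Fin m) ℂ) (R : ℝ → ℝ → Matrix (Fin m) (Fin l) ℂ)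
    (hQ : SmoothM Q) (hR : SmoothM R)
    (Ψ₁ : ℝ → ℝ → Matrix (Fin l) (Fin l) ℂ) (Ψ₂ : ℝ → ℝ → Matrix (Fin m) (Fin l) ℂ)
    (hΨ₁ : SmoothM Ψ₁) (hΨ₂ : SmoothM Ψ₂)
    (hΨ : IsLaxEigen μ Q R (fun x t => Matrix.fromRows (Ψ₁ x t) (Ψ₂ x t)))
    (Φ₁ : ℝ → ℝ → Matrix (Fin l) (Fin l) ℂ) (Φ₂ : ℝ → ℝ → Matrix (Fin l) (Fin m) ℂ)
    (hΦ₁ : SmoothM Φ₁) (hΦ₂ : SmoothM Φ₂)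
    (hΦ : IsAdjLaxEigen μ Q R (fun x t => Matrix.fromCols (Φ₁ x t) (Φ₂ x t))) :
    ∀ x t : ℝ,
      pdt (fun x t => Φ₁ x t * Ψ₁ x t - Φ₂ x t * Ψ₂ x t) x t
        = pdx (fun x t =>
            (4 * μ) • (Φ₁ x t * Ψ₁ x t - Φ₂ x t * Ψ₂ x t)
              + (2 * Complex.I) • (Φ₁ x t * Q x t * Ψ₂ x t
                  + Φ₂ x t * R x t * Ψ₁ x t)) x t := by
  intro x t
  obtain ⟨hΨx, hΨt⟩ := hΨ
  obtain ⟨hΦx, hΦt⟩ := hΦ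
  have eΨx := hΨx x t
  rw [pdx_fromRows] at eΨx
  simp only [LaxU, Matrix.fromBlocks_mul_fromRows, Matrix.fromRows_ext_iff] at eΨx
  obtain ⟨eΨ1x, eΨ2x⟩ := eΨx
  have eΨt := hΨt x t
  rw [pdt_fromRows] at eΨt
  simp only [LaxV, Matrix.fromBlocks_mul_fromRows, Matrix.fromRows_ext_iff] at eΨt
  obtain ⟨eΨ1t, eΨ2t⟩ := eΨt
  have eΦx := hΦx x t
  rw [pdx_fromColumns] at eΦx
  simp only [LaxU, Matrix.fromCols_mul_fromBlocks, neg_fromColumns,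
    Matrix.fromCols_ext_iff] at eΦx
  obtain ⟨eΦ1x, eΦ2x⟩ := eΦx
  have eΦt := hΦt x t
  rw [pdt_fromColumns] at eΦt
  simp only [LaxV, Matrix.fromCols_mul_fromBlocks, neg_fromColumns,
    Matrix.fromCols_ext_iff] at eΦt
  obtain ⟨eΦ1t, eΦ2t⟩ := eΦt
  rw [pdt_sub (smoothM_mul hΦ₁ hΨ₁) (smoothM_mul hΦ₂ hΨ₂),
    pdt_mul hΦ₁ hΨ₁, pdt_mul hΦ₂ hΨ₂,
    pdx_add (smoothM_smul _ (smoothM_sub (smoothM_mul hΦ₁ hΨ₁) (smoothM_mul hΦ₂ hΨ₂)))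
      (smoothM_smul _ (smoothM_add (smoothM_mul (smoothM_mul hΦ₁ hQ) hΨ₂)
        (smoothM_mul (smoothM_mul hΦ₂ hR) hΨ₁))),
    pdx_smul, pdx_smul,
    pdx_sub (smoothM_mul hΦ₁ hΨ₁) (smoothM_mul hΦ₂ hΨ₂),
    pdx_add (smoothM_mul (smoothM_mul hΦ₁ hQ) hΨ₂) (smoothM_mul (smoothM_mul hΦ₂ hR) hΨ₁),
    pdx_mul hΦ₁ hΨ₁, pdx_mul hΦ₂ hΨ₂,
    pdx_mul (smoothM_mul hΦ₁ hQ) hΨ₂, pdx_mul (smoothM_mul hΦ₂ hR) hΨ₁,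
    pdx_mul hΦ₁ hQ, pdx_mul hΦ₂ hR,
    eΨ1x, eΨ2x, eΨ1t, eΨ2t, eΦ1x, eΦ2x, eΦ1t, eΦ2t]
  simp only [Matrix.add_mul, Matrix.mul_add, Matrix.sub_mul, Matrix.mul_sub,
    Matrix.neg_mul, Matrix.mul_neg, Matrix.smul_mul, Matrix.mul_smul, Matrix.mul_assoc,
    Matrix.one_mul, Matrix.mul_one, one_mul, mul_one, smul_add, smul_sub, smul_smul, smul_neg, neg_add, neg_sub, neg_neg]
  match_scalars <;> (ring_nf; try simp only [Complex.I_sq]; try ring_nf)
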